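/- arXiv:2012.01905 — 3 statements merged into one kernel-verified Lean document; each statement's English description precedes it below -/
import Mathlib

section
/- Let λ₁, λ₂ be elements of a commutative ring and let A be the (m+n)×(m+n) matrix equal to λ₁ times the identity plus λ₂ times the adjacency matrix of the complete bipartite graph K_{m,n}. Then det(A) = λ₁^{m+n} − m·n·λ₁^{m+n−2}·λ₂². -/
/-!
Write `s : ι → Bool` for the bipartition and `k, l` for the sizes of its two parts. The adjacency
matrix factors as `P * Q` through the two-element index type `Bool`: the columns of `P` are the
indicators of the parts, the rows of `Q` those of their complements. Comparing characteristic
polynomials of `P * Q` and `Q * P` (Sylvester) gives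
`det (a • 1 + b • P * Q) = a ^ (|ι| - 2) * det (a • 1 + b • Q * P)`, and `Q * P` has zero
diagonal and off-diagonal entries `k` and `l`, so the right-hand side is
`a ^ (|ι| - 2) * (a ^ 2 - k * l * b ^ 2)`.
-/

open Matrix Finset

theorem Matrix.det_scalar_sub_mul_comm {ι κ R : Type*} [Fintype ι] [DecidableEq ι] [Fintype κ]
    [DecidableEq κ] [CommRing R] (C : Matrix ι κ R) (D : Matrix κ ι R)
    (h : Fintype.card κ ≤ Fintype.card ι) (a : R) :
    det (scalar ι a - C * D) =
      a ^ (Fintype.card ι - Fintype.card κ) * det (scalar κ a - D * C) := by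
  simpa only [eval_charpoly, Polynomial.eval_mul, Polynomial.eval_pow, Polynomial.eval_X]
    using congr_arg (Polynomial.eval a) (charpoly_mul_comm_of_le C D h)

theorem Matrix.det_bool {R : Type*} [CommRing R] (M : Matrix Bool Bool R) :
    M.det = M false false * M true true - M false true * M true false := by
  rw [← det_reindex_self finTwoEquiv.symm, det_fin_two]
  rfl

def completeBipartiteMatrix {ι R : Type*} [CommRing R] (s : ι → Bool) : Matrix ι ι R :=
  of fun i j => if s i = s j then 0 else 1

def partIndicator {ι : Type*} (R : Type*) [CommRing R] (s : ι → Bool) : Matrix ι Bool R :=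
  of fun i c => if s i = c then 1 else 0

def partCoindicator {ι : Type*} (R : Type*) [CommRing R] (s : ι → Bool) : Matrix Bool ι R :=
  of fun c j => if s j = c then 0 else 1

section CompleteBipartite

variable {ι R : Type*} [CommRing R]

theorem partIndicator_mul_partCoindicator (s : ι → Bool) :
    partIndicator R s * partCoindicator R s = completeBipartiteMatrix s := by
  ext i j
  cases hi : s i <;> cases hj : s j <;>
    simp [partIndicator, partCoindicator, completeBipartiteMatrix, mul_apply, hi, hj]

theorem partCoindicator_mul_partIndicator [Fintype ι] (s : ι → Bool) :
    partCoindicator R s * partIndicator R s =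
      of fun c c' => if c = c' then 0 else (#{j | s j = c'} : R) := by
  ext c c'
  rw [of_apply]
  split_ifs with h
  · subst h
    simp +contextual [mul_apply, partIndicator, partCoindicator]
  · simp +contextual [mul_apply, partIndicator, partCoindicator, Ne.symm h, sum_boole]

theorem det_smul_one_add_smul_completeBipartiteMatrix [Fintype ι] [DecidableEq ι]
    (s : ι → Bool) (a b : R) :
    det (a • 1 + b • completeBipartiteMatrix s) =
      a ^ Fintype.card ι -
        (#{i | s i} * #{i | ¬ s i} : ℕ) * a ^ (Fintype.card ι - 2) * b ^ 2 := by
  rcases lt_or_ge (Fintype.card ι) 2 with hcard | hcard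
  · have : Subsingleton ι := Fintype.card_le_one_iff_subsingleton.mp (by omega)
    have hB : completeBipartiteMatrix s = (0 : Matrix ι ι R) := by
      ext i j
      simp [completeBipartiteMatrix, Subsingleton.elim i j]
    have hparts : #{i | s i} * #{i | ¬ s i} = 0 := by
      have := card_filter_add_card_filter_not (s := univ) (p := fun i => s i = true)
      rw [card_univ] at this
      rw [Nat.mul_eq_zero]
      omega
    rw [hB, hparts]
    simp
  · have hfactor : a • 1 + b • completeBipartiteMatrix s =
        scalar ι a - (-b • partIndicator R s) * partCoindicator R s := by
      rw [smul_mul, partIndicator_mul_partCoindicator, neg_smul, sub_neg_eq_add,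
        smul_one_eq_diagonal]
      rfl
    have hsmall : det (scalar Bool a - partCoindicator R s * (-b • partIndicator R s)) =
        a ^ 2 - (#{i | s i} * #{i | ¬ s i} : ℕ) * b ^ 2 := by
      rw [Matrix.mul_smul, partCoindicator_mul_partIndicator, det_bool]
      simp only [Matrix.sub_apply, Matrix.smul_apply, of_apply, scalar_apply, diagonal_apply,
        smul_eq_mul, Nat.cast_mul, reduceIte, Bool.false_eq_true, Bool.true_eq_false,
        Bool.not_eq_true]
      ring
    rw [hfactor, det_scalar_sub_mul_comm _ _ (by simpa using hcard), Fintype.card_bool, hsmall,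
      ← pow_sub_mul_pow a hcard]
    ring

end CompleteBipartite

theorem stmt_7_general {R : Type*} [CommRing R] (m n : ℕ)
    (lam1 lam2 : R)
    (B : Matrix (Fin (m + n)) (Fin (m + n)) R)
    (hB : ∀ i j, B i j = if decide ((i : ℕ) < m) = decide ((j : ℕ) < m) then 0 else 1)
    (A : Matrix (Fin (m + n)) (Fin (m + n)) R)
    (hA : A = lam1 • (1 : Matrix (Fin (m + n)) (Fin (m + n)) R) + lam2 • B) :
    A.det = lam1 ^ (m + n) - (m * n : ℕ) * lam1 ^ (m + n - 2) * lam2 ^ 2 := by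
  have hB' : B = completeBipartiteMatrix fun i : Fin (m + n) => decide ((i : ℕ) < m) := by
    ext i j
    exact hB i j
  have hleft : #{i : Fin (m + n) | (i : ℕ) < m} = m := by
    simp [Fin.card_filter_val_lt]
  have hright : #{i : Fin (m + n) | ¬ (i : ℕ) < m} = n := by
    have := card_filter_add_card_filter_not (s := univ) (p := fun i : Fin (m + n) => (i : ℕ) < m)
    rw [hleft, card_univ, Fintype.card_fin] at this
    omega
  rw [hA, hB', det_smul_one_add_smul_completeBipartiteMatrix, Fintype.card_fin]
  simp only [decide_eq_true_eq, hleft, hright]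

theorem stmt_7 {R : Type*} [CommRing R] (m n : ℕ) (hm : 1 ≤ m) (hn : 1 ≤ n)
    (lam1 lam2 : R)
    (B : Matrix (Fin (m + n)) (Fin (m + n)) R)
    (hB : ∀ i j, B i j = if decide ((i : ℕ) < m) = decide ((j : ℕ) < m) then 0 else 1)
    (A : Matrix (Fin (m + n)) (Fin (m + n)) R)
    (hA : A = lam1 • (1 : Matrix (Fin (m + n)) (Fin (m + n)) R) + lam2 • B) :
    A.det = lam1 ^ (m + n) - (m * n : ℕ) * lam1 ^ (m + n - 2) * lam2 ^ 2 :=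
  stmt_7_general m n lam1 lam2 B hB A hA
end

section
/- Let λ₁, λ₂ be real numbers with λ₁ⁿ − (n−1)λ₁^{n−2}λ₂² ≠ 0, let A = λ₁·I + λ₂·S where S is the adjacency matrix of the star K_{1,n−1} (n ≥ 3, center 1), and let X = A⁻¹. Then X_{11} − (n−2)·X_{n−1,n} − X_{nn} = 0. -/
/-!
Write `S = e uᵀ + u eᵀ`, with `e` the indicator of the centre and `u` that of the leaves. Since
`e ⬝ u = 0`, one gets `S² = (n - 1) e eᵀ + u uᵀ` and `S³ = (n - 1) S`, so every polynomial in `S`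
is a combination of `1`, `S`, `S²`. The functional `M ↦ M₁₁ - (n - 2) M_{n-1,n} - M_{nn}` kills
all three, hence kills every polynomial in `S`. Finally `A⁻¹` is a polynomial in `S`: `A` lies in
the finite-dimensional algebra `ℝ[S]`, on which left multiplication by an invertible `A` is
injective, hence surjective (a singular `A` has the junk inverse `0`, which lies there too).
-/

open Matrix Polynomial

theorem Matrix.inv_mem_subalgebra {K n : Type*} [Field K] [Fintype n] [DecidableEq n]
    {B : Subalgebra K (Matrix n n K)} {A : Matrix n n K} (hA : A ∈ B) : A⁻¹ ∈ B := by
  by_cases hdet : IsUnit A.det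
  · have hinj : Function.Injective (LinearMap.mulLeft K (⟨A, hA⟩ : B)) := fun x y hxy =>
      Subtype.ext <| by
        have hAxy : A * x = A * y := congrArg Subtype.val hxy
        rw [← nonsing_inv_mul_cancel_left A (x : Matrix n n K) hdet, hAxy,
          nonsing_inv_mul_cancel_left A _ hdet]
    obtain ⟨⟨C, hC⟩, hAC⟩ := LinearMap.injective_iff_surjective.mp hinj 1
    rwa [inv_eq_right_inv (congrArg Subtype.val hAC)]
  · rw [nonsing_inv_apply_not_isUnit A hdet]
    exact zero_mem B

section VecMulVec

variable {R n : Type*} [CommRing R] [Fintype n] [DecidableEq n]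

theorem Matrix.vecMulVec_add_vecMulVec_sq (e u : n → R) (heu : e ⬝ᵥ u = 0) :
    (vecMulVec e u + vecMulVec u e) ^ 2 =
      (u ⬝ᵥ u) • vecMulVec e e + (e ⬝ᵥ e) • vecMulVec u u := by
  have hue : u ⬝ᵥ e = 0 := by rwa [dotProduct_comm]
  simp only [sq, add_mul, mul_add, vecMulVec_mul_vecMulVec, heu, hue, zero_smul,
    vecMulVec_zero, vecMulVec_smul, zero_add, add_zero]
  rw [add_comm]

theorem Matrix.vecMulVec_add_vecMulVec_pow_three (e u : n → R) (heu : e ⬝ᵥ u = 0) :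
    (vecMulVec e u + vecMulVec u e) ^ 3 =
      ((e ⬝ᵥ e) * (u ⬝ᵥ u)) • (vecMulVec e u + vecMulVec u e) := by
  have hue : u ⬝ᵥ e = 0 := by rwa [dotProduct_comm]
  rw [pow_succ, vecMulVec_add_vecMulVec_sq e u heu]
  simp only [add_mul, mul_add, smul_mul_assoc, vecMulVec_mul_vecMulVec, heu, hue, zero_smul,
    vecMulVec_zero, smul_zero, add_zero, zero_add, vecMulVec_smul, smul_smul, smul_add]
  rw [mul_comm]

end VecMulVec

theorem LinearMap.map_pow_eq_zero_of_pow_three {R A : Type*} [CommRing R] [Ring A]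
    [Algebra R A] (φ : A →ₗ[R] R) {s : A} {c : R} (hs : s ^ 3 = c • s) (h0 : φ 1 = 0)
    (h1 : φ s = 0) (h2 : φ (s ^ 2) = 0) : ∀ k, φ (s ^ k) = 0
  | 0 => by rwa [pow_zero]
  | 1 => by rwa [pow_one]
  | 2 => h2
  | k + 3 => by
    rw [pow_add, hs, mul_smul_comm, ← pow_succ, map_smul,
      φ.map_pow_eq_zero_of_pow_three hs h0 h1 h2 (k + 1), smul_zero]

theorem LinearMap.map_aeval_eq_zero_of_pow_three {R A : Type*} [CommRing R] [Ring A]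
    [Algebra R A] (φ : A →ₗ[R] R) {s : A} {c : R} (hs : s ^ 3 = c • s) (h0 : φ 1 = 0)
    (h1 : φ s = 0) (h2 : φ (s ^ 2) = 0) (p : R[X]) : φ (aeval s p) = 0 := by
  rw [aeval_eq_sum_range, map_sum]
  exact Finset.sum_eq_zero fun k _ => by
    rw [map_smul, φ.map_pow_eq_zero_of_pow_three hs h0 h1 h2, smul_zero]

section Star

variable {R : Type*} [CommRing R] {n : ℕ}

variable (R n) in
def centerIndicator : Fin n → R := fun i => if (i : ℕ) = 0 then 1 else 0

variable (R n) in
def leafIndicator : Fin n → R := fun i => if (i : ℕ) = 0 then 0 else 1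

variable (R n) in
def starAdjacency : Matrix (Fin n) (Fin n) R :=
  vecMulVec (centerIndicator R n) (leafIndicator R n) +
    vecMulVec (leafIndicator R n) (centerIndicator R n)

theorem starAdjacency_apply (i j : Fin n) :
    starAdjacency R n i j =
      if ((i : ℕ) = 0 ∧ (j : ℕ) ≠ 0) ∨ ((j : ℕ) = 0 ∧ (i : ℕ) ≠ 0) then 1 else 0 := by
  simp only [starAdjacency, Matrix.add_apply, vecMulVec_apply, centerIndicator, leafIndicator]
  split_ifs <;> simp_all

theorem centerIndicator_dotProduct_leafIndicator :
    centerIndicator R n ⬝ᵥ leafIndicator R n = 0 :=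
  Finset.sum_eq_zero fun i _ => by
    simp only [centerIndicator, leafIndicator]
    split_ifs <;> simp

theorem centerIndicator_dotProduct_self (hn : 0 < n) :
    centerIndicator R n ⬝ᵥ centerIndicator R n = 1 := by
  obtain ⟨m, rfl⟩ := Nat.exists_eq_add_of_lt hn
  simp [dotProduct, centerIndicator]

theorem leafIndicator_dotProduct_self (hn : 0 < n) :
    leafIndicator R n ⬝ᵥ leafIndicator R n = n - 1 := by
  obtain ⟨m, rfl⟩ := Nat.exists_eq_add_of_lt hn
  simp [dotProduct, Fin.sum_univ_succ, leafIndicator]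

theorem starAdjacency_entry_identity_of_mem_adjoin {c a b : Fin n} (hc : (c : ℕ) = 0)
    (ha : (a : ℕ) ≠ 0) (hb : (b : ℕ) ≠ 0) (hab : a ≠ b) {M : Matrix (Fin n) (Fin n) R}
    (hM : M ∈ Algebra.adjoin R {starAdjacency R n}) :
    M c c - ((n : R) - 2) * M a b - M b b = 0 := by
  rw [Algebra.adjoin_singleton_eq_range_aeval] at hM
  obtain ⟨p, rfl⟩ := hM
  have hn : 0 < n := c.pos
  have hce := centerIndicator_dotProduct_leafIndicator (R := R) (n := n)
  let φ : Matrix (Fin n) (Fin n) R →ₗ[R] R := entryLinearMap R R c c -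
    ((n : R) - 2) • entryLinearMap R R a b - entryLinearMap R R b b
  refine φ.map_aeval_eq_zero_of_pow_three (vecMulVec_add_vecMulVec_pow_three _ _ hce) ?_ ?_ ?_ p
  · simp [φ, one_apply, hab]
  · simp [φ, vecMulVec_apply, centerIndicator, leafIndicator, hc, ha, hb]
  · rw [vecMulVec_add_vecMulVec_sq _ _ hce, centerIndicator_dotProduct_self hn,
      leafIndicator_dotProduct_self hn]
    simp [φ, vecMulVec_apply, centerIndicator, leafIndicator, hc, ha, hb]
    ring

end Star

theorem stmt_9 (n : ℕ) (hn : 3 ≤ n) (lam1 lam2 : ℝ)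
    (S : Matrix (Fin n) (Fin n) ℝ)
    (hS : ∀ i j, S i j = if ((i : ℕ) = 0 ∧ (j : ℕ) ≠ 0) ∨ ((j : ℕ) = 0 ∧ (i : ℕ) ≠ 0)
      then 1 else 0)
    (A : Matrix (Fin n) (Fin n) ℝ)
    (hA : A = lam1 • (1 : Matrix (Fin n) (Fin n) ℝ) + lam2 • S)
    (X : Matrix (Fin n) (Fin n) ℝ) (hX : X = A⁻¹) :
    X ⟨0, by omega⟩ ⟨0, by omega⟩ - (n - 2 : ℝ) * X ⟨n - 2, by omega⟩ ⟨n - 1, by omega⟩ -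
      X ⟨n - 1, by omega⟩ ⟨n - 1, by omega⟩ = 0 := by
  have hS_star : S = starAdjacency ℝ n := Matrix.ext fun i j => by rw [hS, starAdjacency_apply]
  have hA_mem : A ∈ Algebra.adjoin ℝ {starAdjacency ℝ n} := by
    rw [hA, hS_star]
    exact add_mem (Subalgebra.smul_mem _ (one_mem _) _)
      (Subalgebra.smul_mem _ (Algebra.self_mem_adjoin_singleton ℝ _) _)
  refine starAdjacency_entry_identity_of_mem_adjoin rfl ?_ ?_ ?_
    (hX ▸ Matrix.inv_mem_subalgebra hA_mem)
  all_goals simp [Fin.ext_iff]; omega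
end

section
/- Let λ₁, λ₂ ∈ ℝ and let A be the 4×4 matrix λ₁·I + λ₂·P where P is the adjacency matrix of the path 1–4–3–2 (i.e., edges {1,4},{4,3},{3,2}). If A is invertible and X = A⁻¹, then X_{13} = X_{24}. -/
/-!
The relabelling `1 ↔ 2, 3 ↔ 4` is an automorphism of the path `1 – 4 – 3 – 2`, so it fixes `P`,
hence `A`, hence `A⁻¹`, and it maps the entry `(1, 3)` to `(2, 4)`.
-/

namespace Matrix

variable {n α : Type*} [Fintype n] [DecidableEq n] [CommRing α]

theorem inv_submatrix_eq_of_submatrix_eq {A : Matrix n n α} {e : n ≃ n}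
    (h : A.submatrix e e = A) : A⁻¹.submatrix e e = A⁻¹ := by
  rw [← inv_submatrix_equiv, h]

theorem inv_apply_equiv_of_submatrix_eq {A : Matrix n n α} {e : n ≃ n}
    (h : A.submatrix e e = A) (i j : n) : A⁻¹ (e i) (e j) = A⁻¹ i j :=
  congrFun₂ (inv_submatrix_eq_of_submatrix_eq h) i j

end Matrix

open Matrix in
theorem stmt_19_general (lam1 lam2 : ℝ)
    (P : Matrix (Fin 4) (Fin 4) ℝ)
    (hP : P = !![0, 0, 0, 1; 0, 0, 1, 0; 0, 1, 0, 1; 1, 0, 1, 0])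
    (A : Matrix (Fin 4) (Fin 4) ℝ)
    (hA : A = lam1 • (1 : Matrix (Fin 4) (Fin 4) ℝ) + lam2 • P)
    (X : Matrix (Fin 4) (Fin 4) ℝ) (hX : X = A⁻¹) :
    X 0 2 = X 1 3 := by
  let σ : Equiv.Perm (Fin 4) := Equiv.swap 0 1 * Equiv.swap 2 3
  have hPσ : P.submatrix σ σ = P := by
    subst hP
    ext i j
    fin_cases i <;> fin_cases j <;> rfl
  have hAσ : A.submatrix σ σ = A := by
    rw [hA]
    calc (lam1 • 1 + lam2 • P).submatrix σ σ
        = lam1 • (1 : Matrix (Fin 4) (Fin 4) ℝ).submatrix σ σ + lam2 • P.submatrix σ σ := rfl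
      _ = lam1 • 1 + lam2 • P := by rw [submatrix_one_equiv, hPσ]
  subst hX
  exact (inv_apply_equiv_of_submatrix_eq hAσ 0 2).symm

theorem stmt_19 (lam1 lam2 : ℝ)
    (P : Matrix (Fin 4) (Fin 4) ℝ)
    (hP : P = !![0, 0, 0, 1; 0, 0, 1, 0; 0, 1, 0, 1; 1, 0, 1, 0])
    (A : Matrix (Fin 4) (Fin 4) ℝ)
    (hA : A = lam1 • (1 : Matrix (Fin 4) (Fin 4) ℝ) + lam2 • P)
    (hinv : IsUnit A.det)
    (X : Matrix (Fin 4) (Fin 4) ℝ) (hX : X = A⁻¹) :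
    X 0 2 = X 1 3 :=
  stmt_19_general lam1 lam2 P hP A hA X hX
end
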